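/- arXiv:2308.09974 — 2 statements merged into one kernel-verified Lean document; each statement's English description precedes it below -/
import Mathlib

section
/- Let $\kappa:\mathbb{R}\to\mathbb{R}$ be continuous with $\kappa(t)\geq 0$ for $t\geq 0$ and $\kappa(t)\leq 0$ for $t\leq 0$. Then there is no differentiable nowhere-vanishing function $y:\mathbb{R}\to\mathbb{R}$ with $y'(t)=1-\kappa(t)y(t)$ for all $t\in\mathbb{R}$. -/
/-! Along the positive half-line a negative solution has `κ y ≤ 0`, hence `y' ≥ 1`, so `y`
reaches `0` by time `-y 0`; symmetrically, a positive solution must vanish in the past by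
time `-y 0`. Since a continuous nowhere-zero `y` has constant sign, both cases are absurd. -/

open Set

theorem Continuous.lt_of_forall_ne {X α : Type*} [TopologicalSpace X] [PreconnectedSpace X]
    [LinearOrder α] [TopologicalSpace α] [OrderClosedTopology α] {f : X → α} (hf : Continuous f)
    {c : α} (hne : ∀ x, f x ≠ c) {a : X} (ha : f a < c) (b : X) : f b < c :=
  not_le.1 fun hb =>
    (mem_range_of_exists_le_of_exists_ge hf ⟨a, ha.le⟩ ⟨b, hb⟩).elim fun x hx => hne x hx

theorem Continuous.lt_of_forall_ne' {X α : Type*} [TopologicalSpace X] [PreconnectedSpace X]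
    [LinearOrder α] [TopologicalSpace α] [OrderClosedTopology α] {f : X → α} (hf : Continuous f)
    {c : α} (hne : ∀ x, f x ≠ c) {a : X} (ha : c < f a) (b : X) : c < f b :=
  hf.lt_of_forall_ne (α := αᵒᵈ) hne ha b

theorem sub_le_sub_of_hasDerivAt_one_sub_mul {κ y : ℝ → ℝ} {D : Set ℝ} (hD : Convex ℝ D)
    (hy : ∀ t, HasDerivAt y (1 - κ t * y t) t) (hκy : ∀ t ∈ D, κ t * y t ≤ 0) {a b : ℝ}
    (ha : a ∈ D) (hb : b ∈ D) (hab : a ≤ b) : b - a ≤ y b - y a := by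
  have h := hD.mul_sub_le_image_sub_of_le_deriv (C := 1)
    (fun t _ => (hy t).continuousAt.continuousWithinAt)
    (fun t _ => (hy t).differentiableAt.differentiableWithinAt)
    (fun t ht => by rw [(hy t).deriv]; linarith [hκy t (interior_subset ht)]) a ha b hb hab
  rwa [one_mul] at h

theorem stmt9_general (κ : ℝ → ℝ)
    (hκpos : ∀ t, 0 ≤ t → 0 ≤ κ t) (hκneg : ∀ t, t ≤ 0 → κ t ≤ 0) :
    ¬ ∃ y : ℝ → ℝ, (∀ t, HasDerivAt y (1 - κ t * y t) t) ∧ (∀ t, y t ≠ 0) := by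
  rintro ⟨y, hy, hy0⟩
  have hyc : Continuous y := continuous_iff_continuousAt.2 fun t => (hy t).continuousAt
  rcases (hy0 0).lt_or_gt with hneg | hpos
  · have hy_neg := hyc.lt_of_forall_ne hy0 hneg
    have := sub_le_sub_of_hasDerivAt_one_sub_mul (a := 0) (b := -y 0) (convex_Ici 0) hy
      (fun t ht => mul_nonpos_of_nonneg_of_nonpos (hκpos t ht) (hy_neg t).le)
      self_mem_Ici (show -y 0 ∈ Ici 0 by simpa using hneg.le) (by linarith)
    linarith [hy_neg (-y 0)]
  · have hy_pos := hyc.lt_of_forall_ne' hy0 hpos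
    have := sub_le_sub_of_hasDerivAt_one_sub_mul (a := -y 0) (b := 0) (convex_Iic 0) hy
      (fun t ht => mul_nonpos_of_nonpos_of_nonneg (hκneg t ht) (hy_pos t).le)
      (show -y 0 ∈ Iic 0 by simpa using hpos.le) self_mem_Iic (by linarith)
    linarith [hy_pos (-y 0)]

/-- If `κ : ℝ → ℝ` is continuous with `κ ≥ 0` on `[0,∞)` and
`κ ≤ 0` on `(-∞,0]`, then there is no differentiable nowhere-vanishing
`y : ℝ → ℝ` with `y' = 1 - κ y` everywhere. -/
theorem stmt9 (κ : ℝ → ℝ) (hκc : Continuous κ)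
    (hκpos : ∀ t, 0 ≤ t → 0 ≤ κ t) (hκneg : ∀ t, t ≤ 0 → κ t ≤ 0) :
    ¬ ∃ y : ℝ → ℝ, (∀ t, HasDerivAt y (1 - κ t * y t) t) ∧ (∀ t, y t ≠ 0) :=
  stmt9_general κ hκpos hκneg
end

section
/- Let $\gamma:[s_0,b)\to\mathbb{R}$ be continuous, nondecreasing, and positive, let $A:[s_0,b)\to\mathbb{R}$ be continuous with $|A(s)|\le C$ for some constant $C$, and let $f:[s_0,b)\to(0,\infty)$ be differentiable with $f'(s)=-2f(s)\gamma(s)A(s)$ and $\lim_{s\to b^-}f(s)=0$. Then $\lim_{s\to b^-}\gamma(s)=+\infty$. -/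
/-!
If `γ` stayed below some `M` on `[s₀, b)`, then `f' = -2 f γ A ≥ -2 M C f`, so
`s ↦ f s * exp (2 M C s)` would be nondecreasing and `f` would stay above the positive constant
`f s₀ * exp (-2 M C (b - s₀))`, contradicting `f → 0`. A monotone function that is unbounded
on `[s₀, b)` tends to `+∞` at `b⁻`.
-/

open Set Filter Topology Real

theorem MonotoneOn.tendsto_nhdsLT_atTop {α β : Type*} [LinearOrder α] [TopologicalSpace α]
    [OrderTopology α] [LinearOrder β] {g : α → β} {a b : α} (hg : MonotoneOn g (Ico a b))
    (hunbdd : ¬BddAbove (g '' Ico a b)) : Tendsto g (𝓝[<] b) atTop := by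
  refine tendsto_atTop.2 fun M => ?_
  obtain ⟨_, ⟨t, ht, rfl⟩, hMt⟩ := not_bddAbove_iff.1 hunbdd M
  filter_upwards [Ioo_mem_nhdsLT ht.2] with s hs
  exact hMt.le.trans (hg ht ⟨ht.1.trans hs.1.le, hs.2⟩ hs.1.le)

theorem monotoneOn_mul_exp_of_hasDerivWithinAt {D : Set ℝ} (hD : Convex ℝ D) {f f' : ℝ → ℝ}
    {K : ℝ} (hf : ∀ x ∈ D, HasDerivWithinAt f (f' x) D x) (hbound : ∀ x ∈ D, -K * f x ≤ f' x) :
    MonotoneOn (fun x => f x * exp (K * x)) D := by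
  have hderiv : ∀ x ∈ D, HasDerivWithinAt (fun x => f x * exp (K * x))
      ((f' x + K * f x) * exp (K * x)) D x := fun x hx => by
    have hexp : HasDerivAt (fun x => exp (K * x)) (exp (K * x) * K) x := by
      simpa using ((hasDerivAt_id x).const_mul K).exp
    exact ((hf x hx).fun_mul hexp.hasDerivWithinAt).congr_deriv (by ring)
  refine monotoneOn_of_hasDerivWithinAt_nonneg hD
    (fun x hx => (hderiv x hx).continuousWithinAt)
    (fun x hx => (hderiv x (interior_subset hx)).mono interior_subset) fun x hx => ?_
  exact mul_nonneg (by linarith [hbound x (interior_subset hx)]) (exp_pos _).le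

theorem not_tendsto_nhdsLT_zero_of_forall_le {f : ℝ → ℝ} {a b ε : ℝ} (hab : a < b) (hε : 0 < ε)
    (hf : ∀ s ∈ Ico a b, ε ≤ f s) : ¬Tendsto f (𝓝[<] b) (𝓝 0) := fun hlim => by
  obtain ⟨s, hfs, hs⟩ :=
    ((hlim.eventually (eventually_lt_nhds hε)).and (Ioo_mem_nhdsLT hab)).exists
  exact (hf s (Ioo_subset_Ico_self hs)).not_gt hfs

theorem stmt11_general (s₀ b C : ℝ) (hs : s₀ < b)
    (γ A f : ℝ → ℝ)
    (hγmono : MonotoneOn γ (Set.Ico s₀ b))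
    (hγpos : ∀ s ∈ Set.Ico s₀ b, 0 < γ s)
    (hAb : ∀ s ∈ Set.Ico s₀ b, |A s| ≤ C)
    (hfpos : ∀ s ∈ Set.Ico s₀ b, 0 < f s)
    (hf : ∀ s ∈ Set.Ico s₀ b,
      HasDerivWithinAt f (-2 * f s * γ s * A s) (Set.Ico s₀ b) s)
    (hlim : Tendsto f (nhdsWithin b (Set.Iio b)) (nhds 0)) :
    Tendsto γ (nhdsWithin b (Set.Iio b)) atTop := by
  refine hγmono.tendsto_nhdsLT_atTop fun ⟨M, hM⟩ => ?_
  have hγM : ∀ s ∈ Ico s₀ b, γ s ≤ M := fun s hs' => hM (mem_image_of_mem γ hs')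
  have hs₀ : s₀ ∈ Ico s₀ b := left_mem_Ico.2 hs
  set K := 2 * M * C
  have hK : 0 ≤ K := by
    have hM₀ : 0 ≤ M := (hγpos s₀ hs₀).le.trans (hγM s₀ hs₀)
    have hC : 0 ≤ C := (abs_nonneg _).trans (hAb s₀ hs₀)
    positivity
  have hbound : ∀ s ∈ Ico s₀ b, -K * f s ≤ -2 * f s * γ s * A s := fun s hs' => by
    have hγA : γ s * A s ≤ M * C := calc
      γ s * A s ≤ γ s * |A s| := mul_le_mul_of_nonneg_left (le_abs_self _) (hγpos s hs').le
      _ ≤ M * C := mul_le_mul (hγM s hs') (hAb s hs') (abs_nonneg _)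
          ((hγpos s hs').le.trans (hγM s hs'))
    nlinarith [hfpos s hs']
  have hmono := monotoneOn_mul_exp_of_hasDerivWithinAt (convex_Ico s₀ b) hf hbound
  have hf₀ := hfpos s₀ hs₀
  refine not_tendsto_nhdsLT_zero_of_forall_le hs (ε := f s₀ * exp (K * s₀) * exp (-(K * b)))
    (by positivity) (fun s hs' => ?_) hlim
  have hfs := hfpos s hs'
  calc f s₀ * exp (K * s₀) * exp (-(K * b))
      ≤ f s * exp (K * s) * exp (-(K * b)) :=
        mul_le_mul_of_nonneg_right (hmono hs₀ hs' hs'.1) (exp_pos _).le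
    _ ≤ f s * exp (K * b) * exp (-(K * b)) := by gcongr; exact hs'.2.le
    _ = f s := by rw [mul_assoc, ← exp_add, add_neg_cancel, exp_zero, mul_one]

/-- If `γ` is continuous, nondecreasing and positive on `[s₀,b)`,
`A` is continuous with `|A| ≤ C`, `f > 0` is differentiable with
`f' = -2 f γ A` and `f → 0` as `s → b⁻`, then `γ → +∞` as `s → b⁻`. -/
theorem stmt11 (s₀ b C : ℝ) (hs : s₀ < b)
    (γ A f : ℝ → ℝ)
    (hγc : ContinuousOn γ (Set.Ico s₀ b)) (hγmono : MonotoneOn γ (Set.Ico s₀ b))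
    (hγpos : ∀ s ∈ Set.Ico s₀ b, 0 < γ s)
    (hAc : ContinuousOn A (Set.Ico s₀ b)) (hAb : ∀ s ∈ Set.Ico s₀ b, |A s| ≤ C)
    (hfpos : ∀ s ∈ Set.Ico s₀ b, 0 < f s)
    (hf : ∀ s ∈ Set.Ico s₀ b,
      HasDerivWithinAt f (-2 * f s * γ s * A s) (Set.Ico s₀ b) s)
    (hlim : Tendsto f (nhdsWithin b (Set.Iio b)) (nhds 0)) :
    Tendsto γ (nhdsWithin b (Set.Iio b)) atTop :=
  stmt11_general s₀ b C hs γ A f hγmono hγpos hAb hfpos hf hlim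
end
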